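/- Let H be a real Hilbert space, Q ⊆ H a nonempty closed convex set, ν > 0, A : Q → H a ν-inverse strongly monotone operator, S : Q → Q a nonexpansive mapping, and f : Q → Q a contraction with coefficient ρ ∈ [0,1). Assume Ω = Fix(S) ∩ S_VI(A,Q) is nonempty. Let {α_n} ⊆ (0,1] and {λ_n} ⊆ [a,b] with 0 < a < b < 2ν be sequences such that α_n → 0, ∑ α_n = +∞, ∑ |α_{n+1} − α_n| < ∞ and ∑ |λ_{n+1} − λ_n| < ∞. Let x_1 ∈ Q and x_{n+1} = α_n·f(x_n) + (1 − α_n)·S(P_Q(x_n − λ_n·A x_n)). Then ‖x_{n+1} − x_n‖ → 0 as n → ∞. -/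

import Mathlib

/-!
For `0 ≤ λ ≤ 2ν` the projected-gradient step `u ↦ P (u - λ • A u)` is nonexpansive on `Q`
(inverse strong monotonicity gives `‖(u - v) - λ • (A u - A v)‖ ≤ ‖u - v‖`) and fixes every
solution of the variational inequality. So the iterates stay in a ball around any `p ∈ Ω`, and
`A (x n)` and `f (x n) - y n`, where `y n = S (P (x n - λ n • A (x n)))`, are bounded.
Subtracting two consecutive steps of the convex combination then gives
`‖x (n+2) - x (n+1)‖ ≤ (1 - (1 - ρ) α (n+1)) ‖x (n+1) - x n‖ + δ n` with `δ` summable, and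
Xu's lemma concludes: as `∑ α n = ∞`, the products `∏ (1 - (1 - ρ) α k)` tend to `0`.
-/

open scoped RealInnerProductSpace
open Filter Finset Topology

section Recurrence

variable {s γ δ : ℕ → ℝ}

theorem le_mul_exp_neg_sum_add_sum (hγ0 : ∀ n, 0 ≤ γ n) (hγ1 : ∀ n, γ n ≤ 1)
    (hδ0 : ∀ n, 0 ≤ δ n) (hrec : ∀ n, s (n + 1) ≤ (1 - γ n) * s n + δ n) {N : ℕ}
    (hsN : 0 ≤ s N) {n : ℕ} (hNn : N ≤ n) :
    s n ≤ s N * Real.exp (-∑ k ∈ Ico N n, γ k) + ∑ k ∈ Ico N n, δ k := by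
  induction n, hNn using Nat.le_induction with
  | base => simp
  | succ n hNn ih =>
    rw [sum_Ico_succ_top hNn, sum_Ico_succ_top hNn, neg_add, Real.exp_add]
    have hexp : 1 - γ n ≤ Real.exp (-γ n) := by linarith [Real.add_one_le_exp (-γ n)]
    have hprod : 0 ≤ s N * Real.exp (-∑ k ∈ Ico N n, γ k) := by positivity
    have hsum : 0 ≤ ∑ k ∈ Ico N n, δ k := sum_nonneg fun k _ ↦ hδ0 k
    calc s (n + 1) ≤ (1 - γ n) * s n + δ n := hrec n
      _ ≤ (1 - γ n) * (s N * Real.exp (-∑ k ∈ Ico N n, γ k) + ∑ k ∈ Ico N n, δ k) + δ n := by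
        gcongr; linarith [hγ1 n]
      _ ≤ _ := by nlinarith [mul_le_mul_of_nonneg_left hexp hprod, mul_nonneg (hγ0 n) hsum]

/-- Xu's lemma. -/
theorem tendsto_zero_of_le_one_sub_mul_add (hs : ∀ n, 0 ≤ s n) (hγ0 : ∀ n, 0 ≤ γ n)
    (hγ1 : ∀ n, γ n ≤ 1) (hγ : ¬Summable γ) (hδ0 : ∀ n, 0 ≤ δ n) (hδ : Summable δ)
    (hrec : ∀ n, s (n + 1) ≤ (1 - γ n) * s n + δ n) :
    Tendsto s atTop (𝓝 0) := by
  refine tendsto_order.2 ⟨fun a ha ↦ .of_forall fun n ↦ ha.trans_le (hs n), fun ε hε ↦ ?_⟩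
  have htail : Tendsto (fun N ↦ ∑' k, δ k - ∑ k ∈ range N, δ k) atTop (𝓝 0) := by
    simpa using (tendsto_const_nhds (x := ∑' k, δ k)).sub hδ.hasSum.tendsto_sum_nat
  obtain ⟨N, hN⟩ := (htail.eventually (gt_mem_nhds (half_pos hε))).exists
  have hγsum := (not_summable_iff_tendsto_nat_atTop_of_nonneg hγ0).1 hγ
  have hexp : Tendsto (fun n ↦ s N * Real.exp (-(∑ k ∈ range n, γ k - ∑ k ∈ range N, γ k)))
      atTop (𝓝 0) := by
    simpa [sub_eq_add_neg] using (Real.tendsto_exp_atBot.comp (tendsto_neg_atTop_atBot.comp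
      (tendsto_atTop_add_const_right _ (-∑ k ∈ range N, γ k) hγsum))).const_mul (s N)
  filter_upwards [eventually_ge_atTop N, hexp.eventually (gt_mem_nhds (half_pos hε))]
    with n hNn hn
  have hsn := le_mul_exp_neg_sum_add_sum hγ0 hγ1 hδ0 hrec (hs N) hNn
  rw [sum_Ico_eq_sub _ hNn, sum_Ico_eq_sub _ hNn] at hsn
  linarith [hδ.sum_le_tsum (range n) fun k _ ↦ hδ0 k]

end Recurrence

section Hilbert

variable {H : Type*} [NormedAddCommGroup H] [InnerProductSpace ℝ H]

theorem norm_sub_le_of_inner_sub_nonpos {u v p q : H} (hp : ⟪u - p, q - p⟫ ≤ 0)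
    (hq : ⟪v - q, p - q⟫ ≤ 0) : ‖p - q‖ ≤ ‖u - v‖ := by
  have hfirm : ‖p - q‖ ^ 2 ≤ ⟪u - v, p - q⟫ := by
    rw [← neg_sub p q, inner_neg_right] at hp
    have hsplit : u - v = (p - q) + (u - p) - (v - q) := by abel
    rw [hsplit, inner_sub_left, inner_add_left, real_inner_self_eq_norm_sq]
    linarith
  nlinarith [real_inner_le_norm (u - v) (p - q), norm_nonneg (p - q), norm_nonneg (u - v)]

theorem norm_le_div_of_mul_norm_sq_le_inner {d e : H} {ν : ℝ} (hν : 0 < ν)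
    (he : ν * ‖e‖ ^ 2 ≤ ⟪e, d⟫) : ‖e‖ ≤ ‖d‖ / ν := by
  rw [le_div_iff₀ hν]
  nlinarith [real_inner_le_norm e d, norm_nonneg e, norm_nonneg d]

theorem norm_sub_smul_le_of_mul_norm_sq_le_inner {d e : H} {ν l : ℝ}
    (he : ν * ‖e‖ ^ 2 ≤ ⟪e, d⟫) (hl0 : 0 ≤ l) (hl : l ≤ 2 * ν) : ‖d - l • e‖ ≤ ‖d‖ := by
  rw [← sq_le_sq₀ (norm_nonneg _) (norm_nonneg _), norm_sub_sq_real, norm_smul,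
    real_inner_smul_right, Real.norm_of_nonneg hl0, real_inner_comm]
  nlinarith [mul_nonneg (mul_nonneg hl0 (sub_nonneg.2 hl)) (sq_nonneg ‖e‖)]

variable {Q : Set H} {P : H → H}

theorem norm_proj_sub_le (hP : ∀ x, ∀ y ∈ Q, ⟪x - P x, y - P x⟫ ≤ 0) (hPmem : ∀ x, P x ∈ Q)
    (u v : H) : ‖P u - P v‖ ≤ ‖u - v‖ :=
  norm_sub_le_of_inner_sub_nonpos (hP u _ (hPmem v)) (hP v _ (hPmem u))

theorem proj_sub_smul_eq_self (hP : ∀ x, ∀ y ∈ Q, ⟪x - P x, y - P x⟫ ≤ 0)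
    (hPmem : ∀ x, P x ∈ Q) {p w : H} (hp : p ∈ Q) (hVI : ∀ y ∈ Q, 0 ≤ ⟪w, y - p⟫) {l : ℝ}
    (hl : 0 ≤ l) : P (p - l • w) = p := by
  have hstep : ⟪p - l • w - p, P (p - l • w) - p⟫ ≤ 0 := by
    rw [sub_sub_cancel_left, inner_neg_left, real_inner_smul_left]
    nlinarith [hVI _ (hPmem (p - l • w))]
  simpa [sub_eq_zero] using norm_sub_le_of_inner_sub_nonpos (hP _ p hp) hstep

theorem norm_proj_sub_smul_sub_le {A : H → H} {ν : ℝ}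
    (hA : ∀ x ∈ Q, ∀ y ∈ Q, ν * ‖A x - A y‖ ^ 2 ≤ ⟪A x - A y, x - y⟫)
    (hP : ∀ x, ∀ y ∈ Q, ⟪x - P x, y - P x⟫ ≤ 0) (hPmem : ∀ x, P x ∈ Q)
    {u v : H} (hu : u ∈ Q) (hv : v ∈ Q) {l l' : ℝ} (hl0 : 0 ≤ l) (hl : l ≤ 2 * ν) :
    ‖P (u - l • A u) - P (v - l' • A v)‖ ≤ ‖u - v‖ + |l - l'| * ‖A v‖ := by
  have hsplit : u - l • A u - (v - l' • A v) = (u - v - l • (A u - A v)) + (l' - l) • A v := by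
    module
  calc ‖P (u - l • A u) - P (v - l' • A v)‖ ≤ ‖u - l • A u - (v - l' • A v)‖ :=
        norm_proj_sub_le hP hPmem _ _
    _ ≤ ‖u - v - l • (A u - A v)‖ + ‖(l' - l) • A v‖ := hsplit ▸ norm_add_le _ _
    _ ≤ ‖u - v‖ + |l - l'| * ‖A v‖ := by
        rw [norm_smul, Real.norm_eq_abs, abs_sub_comm]
        gcongr
        exact norm_sub_smul_le_of_mul_norm_sq_le_inner (hA u hu v hv) hl0 hl

theorem norm_map_proj_sub_smul_sub_le {A S : H → H} {ν : ℝ}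
    (hA : ∀ x ∈ Q, ∀ y ∈ Q, ν * ‖A x - A y‖ ^ 2 ≤ ⟪A x - A y, x - y⟫)
    (hP : ∀ x, ∀ y ∈ Q, ⟪x - P x, y - P x⟫ ≤ 0) (hPmem : ∀ x, P x ∈ Q)
    (hS : ∀ x ∈ Q, ∀ y ∈ Q, ‖S x - S y‖ ≤ ‖x - y‖) {p : H} (hp : p ∈ Q) (hSp : S p = p)
    (hVI : ∀ y ∈ Q, 0 ≤ ⟪A p, y - p⟫) {u : H} (hu : u ∈ Q) {l : ℝ} (hl0 : 0 ≤ l)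
    (hl : l ≤ 2 * ν) :
    ‖S (P (u - l • A u)) - p‖ ≤ ‖u - p‖ := by
  have hT := norm_proj_sub_smul_sub_le (l' := l) hA hP hPmem hu hp hl0 hl
  rw [sub_self, abs_zero, zero_mul, add_zero, proj_sub_smul_eq_self hP hPmem hp hVI hl0] at hT
  have hSu := hS _ (hPmem (u - l • A u)) p hp
  rw [hSp] at hSu
  exact hSu.trans hT

end Hilbert

section ConvexCombination

variable {E : Type*} [SeminormedAddCommGroup E] [NormedSpace ℝ E]

theorem norm_smul_add_one_sub_smul_le {a : ℝ} (ha : a ∈ Set.Icc (0 : ℝ) 1) (v w : E) :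
    ‖a • v + (1 - a) • w‖ ≤ a * ‖v‖ + (1 - a) * ‖w‖ := by
  refine (norm_add_le _ _).trans_eq ?_
  rw [norm_smul, norm_smul, Real.norm_of_nonneg ha.1, Real.norm_of_nonneg (sub_nonneg.2 ha.2)]

variable {x u y : ℕ → E} {α : ℕ → ℝ}

theorem mem_of_eq_convex_comb {Q : Set E} (hQ : Convex ℝ Q)
    (hx : ∀ n, x (n + 1) = α n • u n + (1 - α n) • y n) (hα : ∀ n, α n ∈ Set.Icc (0 : ℝ) 1)
    (hx0 : x 0 ∈ Q) (hu : ∀ n, x n ∈ Q → u n ∈ Q) (hy : ∀ n, x n ∈ Q → y n ∈ Q) (n : ℕ) :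
    x n ∈ Q := by
  induction n with
  | zero => exact hx0
  | succ n ih =>
    rw [hx n]
    exact hQ (hu n ih) (hy n ih) (hα n).1 (sub_nonneg.2 (hα n).2) (add_sub_cancel _ _)

theorem norm_sub_le_max_of_eq_convex_comb (hx : ∀ n, x (n + 1) = α n • u n + (1 - α n) • y n)
    (hα : ∀ n, α n ∈ Set.Icc (0 : ℝ) 1) {p : E} {ρ C : ℝ} (hρ : ρ ∈ Set.Ico (0 : ℝ) 1)
    (hu : ∀ n, ‖u n - p‖ ≤ ρ * ‖x n - p‖ + C) (hy : ∀ n, ‖y n - p‖ ≤ ‖x n - p‖) (n : ℕ) :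
    ‖x n - p‖ ≤ max ‖x 0 - p‖ (C / (1 - ρ)) := by
  set M := max ‖x 0 - p‖ (C / (1 - ρ))
  have hCM : ρ * M + C ≤ M := by
    have := (div_le_iff₀ (sub_pos.2 hρ.2)).1 (le_max_right ‖x 0 - p‖ (C / (1 - ρ)))
    linarith
  induction n with
  | zero => exact le_max_left _ _
  | succ n ih =>
    have hsplit : x (n + 1) - p = α n • (u n - p) + (1 - α n) • (y n - p) := by
      rw [hx n]; module
    have hun : ‖u n - p‖ ≤ M :=
      (hu n).trans ((add_le_add_left (mul_le_mul_of_nonneg_left ih hρ.1) C).trans hCM)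
    calc ‖x (n + 1) - p‖ ≤ α n * ‖u n - p‖ + (1 - α n) * ‖y n - p‖ :=
          hsplit ▸ norm_smul_add_one_sub_smul_le (hα n) _ _
      _ ≤ α n * M + (1 - α n) * M :=
          add_le_add (mul_le_mul_of_nonneg_left hun (hα n).1)
            (mul_le_mul_of_nonneg_left ((hy n).trans ih) (sub_nonneg.2 (hα n).2))
      _ = M := by ring

theorem norm_sub_le_of_eq_convex_comb (hx : ∀ n, x (n + 1) = α n • u n + (1 - α n) • y n)
    {n : ℕ} (hα : α (n + 1) ∈ Set.Icc (0 : ℝ) 1) :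
    ‖x (n + 2) - x (n + 1)‖ ≤ α (n + 1) * ‖u (n + 1) - u n‖ + |α (n + 1) - α n| * ‖u n - y n‖
      + (1 - α (n + 1)) * ‖y (n + 1) - y n‖ := by
  have hsplit : x (n + 2) - x (n + 1) = (α (n + 1) - α n) • (u n - y n)
      + (α (n + 1) • (u (n + 1) - u n) + (1 - α (n + 1)) • (y (n + 1) - y n)) := by
    rw [hx (n + 1), hx n]; module
  have hconv := norm_smul_add_one_sub_smul_le hα (u (n + 1) - u n) (y (n + 1) - y n)
  have htri := norm_add_le ((α (n + 1) - α n) • (u n - y n))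
    (α (n + 1) • (u (n + 1) - u n) + (1 - α (n + 1)) • (y (n + 1) - y n))
  rw [norm_smul, Real.norm_eq_abs, ← hsplit] at htri
  linarith

theorem tendsto_norm_sub_of_eq_convex_comb (hx : ∀ n, x (n + 1) = α n • u n + (1 - α n) • y n)
    (hα : ∀ n, α n ∈ Set.Icc (0 : ℝ) 1) (hαsum : ¬Summable α)
    (hαvar : Summable fun n ↦ |α (n + 1) - α n|) {ρ : ℝ} (hρ : ρ ∈ Set.Ico (0 : ℝ) 1)
    (hu : ∀ n, ‖u (n + 1) - u n‖ ≤ ρ * ‖x (n + 1) - x n‖) {e : ℕ → ℝ} (he0 : ∀ n, 0 ≤ e n)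
    (he : Summable e) (hy : ∀ n, ‖y (n + 1) - y n‖ ≤ ‖x (n + 1) - x n‖ + e n) {K : ℝ}
    (hK : ∀ n, ‖u n - y n‖ ≤ K) :
    Tendsto (fun n ↦ ‖x (n + 1) - x n‖) atTop (𝓝 0) := by
  have hK0 : 0 ≤ K := (norm_nonneg _).trans (hK 0)
  refine tendsto_zero_of_le_one_sub_mul_add (γ := fun n ↦ (1 - ρ) * α (n + 1))
    (δ := fun n ↦ K * |α (n + 1) - α n| + e n) (fun n ↦ norm_nonneg _)
    (fun n ↦ mul_nonneg (sub_nonneg.2 hρ.2.le) (hα _).1)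
    (fun n ↦ by nlinarith [(hα (n + 1)).1, (hα (n + 1)).2, hρ.1]) ?_
    (fun n ↦ add_nonneg (mul_nonneg hK0 (abs_nonneg _)) (he0 n)) ((hαvar.mul_left K).add he)
    fun n ↦ ?_
  · rwa [summable_mul_left_iff (sub_pos.2 hρ.2).ne', summable_nat_add_iff 1]
  · obtain ⟨hα0, hα1⟩ := hα (n + 1)
    calc ‖x (n + 1 + 1) - x (n + 1)‖
        ≤ α (n + 1) * (ρ * ‖x (n + 1) - x n‖) + |α (n + 1) - α n| * K
          + (1 - α (n + 1)) * (‖x (n + 1) - x n‖ + e n) := by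
          refine (norm_sub_le_of_eq_convex_comb hx (hα (n + 1))).trans ?_
          gcongr
          exacts [hu n, hK n, hy n]
      _ ≤ _ := by nlinarith [mul_nonneg hα0 (he0 n)]

end ConvexCombination

theorem stmt_15_general {H : Type*} [NormedAddCommGroup H] [InnerProductSpace ℝ H]
    (Q : Set H) (hQconvex : Convex ℝ Q)
    (ν : ℝ) (hν : 0 < ν)
    (A : H → H) (hA : ∀ x ∈ Q, ∀ y ∈ Q, ν * ‖A x - A y‖ ^ 2 ≤ ⟪A x - A y, x - y⟫)
    (P : H → H) (hPmem : ∀ x, P x ∈ Q)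
    (hP : ∀ (x : H), ∀ y ∈ Q, ⟪x - P x, y - P x⟫ ≤ 0)
    (S : H → H) (hSmem : ∀ x ∈ Q, S x ∈ Q)
    (hS : ∀ x ∈ Q, ∀ y ∈ Q, ‖S x - S y‖ ≤ ‖x - y‖)
    (ρ : ℝ) (hρ : ρ ∈ Set.Ico (0 : ℝ) 1)
    (f : H → H) (hfmem : ∀ x ∈ Q, f x ∈ Q)
    (hf : ∀ x ∈ Q, ∀ y ∈ Q, ‖f x - f y‖ ≤ ρ * ‖x - y‖)
    (Ω : Set H)
    (hΩ : Ω = {x : H | x ∈ Q ∧ S x = x} ∩ {q : H | q ∈ Q ∧ ∀ x ∈ Q, 0 ≤ ⟪A q, x - q⟫})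
    (hΩne : Ω.Nonempty)
    (a b : ℝ) (hab : 0 < a ∧ a < b ∧ b < 2 * ν)
    (α lam : ℕ → ℝ)
    (hα : ∀ n, α n ∈ Set.Ioc (0 : ℝ) 1) (hlam : ∀ n, lam n ∈ Set.Icc a b)
    (hαdiv : Filter.Tendsto (fun N => ∑ n ∈ Finset.range N, α n) Filter.atTop Filter.atTop)
    (hαvar : Summable (fun n => |α (n + 1) - α n|))
    (hlamvar : Summable (fun n => |lam (n + 1) - lam n|))
    (x : ℕ → H) (hx0 : x 0 ∈ Q)
    (hxrec : ∀ n, x (n + 1) = α n • f (x n) + (1 - α n) • S (P (x n - lam n • A (x n)))) :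
    Filter.Tendsto (fun n => ‖x (n + 1) - x n‖) Filter.atTop (nhds 0) := by
  obtain ⟨p, ⟨hpQ, hSp⟩, -, hpVI⟩ := hΩ ▸ hΩne
  have hα' (n : ℕ) : α n ∈ Set.Icc (0 : ℝ) 1 := Set.Ioc_subset_Icc_self (hα n)
  have hlam' (n : ℕ) : 0 ≤ lam n ∧ lam n ≤ 2 * ν :=
    ⟨hab.1.le.trans (hlam n).1, (hlam n).2.trans hab.2.2.le⟩
  have hxQ : ∀ n, x n ∈ Q := mem_of_eq_convex_comb hQconvex hxrec hα' hx0
    (fun n hn ↦ hfmem _ hn) fun n _ ↦ hSmem _ (hPmem _)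
  have hfx (n : ℕ) : ‖f (x n) - p‖ ≤ ρ * ‖x n - p‖ + ‖f p - p‖ :=
    (norm_sub_le_norm_sub_add_norm_sub _ (f p) _).trans (by gcongr; exact hf _ (hxQ n) p hpQ)
  have hyx (n : ℕ) : ‖S (P (x n - lam n • A (x n))) - p‖ ≤ ‖x n - p‖ :=
    norm_map_proj_sub_smul_sub_le hA hP hPmem hS hpQ hSp hpVI (hxQ n) (hlam' n).1 (hlam' n).2
  set M := max ‖x 0 - p‖ (‖f p - p‖ / (1 - ρ))
  have hM : ∀ n, ‖x n - p‖ ≤ M := norm_sub_le_max_of_eq_convex_comb hxrec hα' hρ hfx hyx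
  have hAx (n : ℕ) : ‖A (x n)‖ ≤ M / ν + ‖A p‖ := by
    have hAp := norm_le_div_of_mul_norm_sq_le_inner hν (hA _ (hxQ n) p hpQ)
    have := (div_le_div_iff_of_pos_right hν).2 (hM n)
    linarith [norm_le_norm_add_norm_sub' (A (x n)) (A p)]
  have hM0 : 0 ≤ M / ν + ‖A p‖ := (norm_nonneg _).trans (hAx 0)
  refine tendsto_norm_sub_of_eq_convex_comb hxrec hα'
    ((not_summable_iff_tendsto_nat_atTop_of_nonneg fun n ↦ (hα' n).1).2 hαdiv) hαvar hρ
    (fun n ↦ hf _ (hxQ _) _ (hxQ _)) (fun n ↦ mul_nonneg hM0 (abs_nonneg _))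
    (hlamvar.mul_left _) (fun n ↦ ?_) (K := ρ * M + ‖f p - p‖ + M) fun n ↦ ?_
  · refine (hS _ (hPmem _) _ (hPmem _)).trans <| (norm_proj_sub_smul_sub_le hA hP hPmem
      (hxQ _) (hxQ _) (hlam' _).1 (hlam' _).2).trans ?_
    rw [mul_comm]
    gcongr
    exact hAx n
  · refine (norm_sub_le_norm_sub_add_norm_sub _ p _).trans ?_
    rw [norm_sub_rev p]
    linarith [hfx n, hyx n, hM n, mul_le_mul_of_nonneg_left (hM n) hρ.1]

/-- Under the summability conditions, `‖x_{n+1} - x_n‖ → 0`. -/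
theorem stmt_15 {H : Type*} [NormedAddCommGroup H] [InnerProductSpace ℝ H] [CompleteSpace H]
    (Q : Set H) (hQne : Q.Nonempty) (hQclosed : IsClosed Q) (hQconvex : Convex ℝ Q)
    (ν : ℝ) (hν : 0 < ν)
    (A : H → H) (hA : ∀ x ∈ Q, ∀ y ∈ Q, ν * ‖A x - A y‖ ^ 2 ≤ ⟪A x - A y, x - y⟫)
    (P : H → H) (hPmem : ∀ x, P x ∈ Q)
    (hP : ∀ (x : H), ∀ y ∈ Q, ⟪x - P x, y - P x⟫ ≤ 0)
    (S : H → H) (hSmem : ∀ x ∈ Q, S x ∈ Q)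
    (hS : ∀ x ∈ Q, ∀ y ∈ Q, ‖S x - S y‖ ≤ ‖x - y‖)
    (ρ : ℝ) (hρ : ρ ∈ Set.Ico (0 : ℝ) 1)
    (f : H → H) (hfmem : ∀ x ∈ Q, f x ∈ Q)
    (hf : ∀ x ∈ Q, ∀ y ∈ Q, ‖f x - f y‖ ≤ ρ * ‖x - y‖)
    (Ω : Set H)
    (hΩ : Ω = {x : H | x ∈ Q ∧ S x = x} ∩ {q : H | q ∈ Q ∧ ∀ x ∈ Q, 0 ≤ ⟪A q, x - q⟫})
    (hΩne : Ω.Nonempty)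
    (a b : ℝ) (hab : 0 < a ∧ a < b ∧ b < 2 * ν)
    (α lam : ℕ → ℝ)
    (hα : ∀ n, α n ∈ Set.Ioc (0 : ℝ) 1) (hlam : ∀ n, lam n ∈ Set.Icc a b)
    (hα0 : Filter.Tendsto α Filter.atTop (nhds 0))
    (hαdiv : Filter.Tendsto (fun N => ∑ n ∈ Finset.range N, α n) Filter.atTop Filter.atTop)
    (hαvar : Summable (fun n => |α (n + 1) - α n|))
    (hlamvar : Summable (fun n => |lam (n + 1) - lam n|))
    (x : ℕ → H) (hx0 : x 0 ∈ Q)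
    (hxrec : ∀ n, x (n + 1) = α n • f (x n) + (1 - α n) • S (P (x n - lam n • A (x n)))) :
    Filter.Tendsto (fun n => ‖x (n + 1) - x n‖) Filter.atTop (nhds 0) :=
  stmt_15_general Q hQconvex ν hν A hA P hPmem hP S hSmem hS ρ hρ f hfmem hf Ω hΩ hΩne a b hab α lam
    hα hlam hαdiv hαvar hlamvar x hx0 hxrec
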